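/- If β̂ and β₀ are vectors in ℝ^p and for each i the functional a satisfies |a(z_i, β) − a(z_i, β₀) − da(z_i)'(β−β₀)| ≤ c_a(z_i)·‖β−β₀‖₂ for all β, then the normalized Euclidean norm (1/√n)·‖(a(z_i,β̂) − a(z_i,β₀))_{i=1..n}‖₂ is bounded by ‖β̂−β₀‖₂ · (φ_max^{1/2} + ‖(c_a(z_i))_{i=1..n}‖_{2,n}), where φ_max is the largest eigenvalue of the principal submatrix of A_a = (1/n)·Σ_i da(z_i)da(z_i)' corresponding to the index set support(β̂)∪support(β₀). -/

import Mathlib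

open Matrix

/-!
Write `Δ = β̂ - β₀` and split `a(zᵢ, β̂) - a(zᵢ, β₀)` into the linear part `da(zᵢ)'Δ` and a
remainder. The mean square of the linear part is the quadratic form `Δ'A_aΔ`; because `Δ` vanishes
off `K` this is the quadratic form of the principal submatrix at `Δ|_K`, hence at most
`φ_max ‖Δ‖²` by the spectral theorem. The remainder is bounded coordinatewise by `c_a(zᵢ)‖Δ‖`, and
Minkowski's inequality adds the two bounds.
-/

lemma sqrt_sum_sq_add_le {ι : Type*} [Fintype ι] (f g : ι → ℝ) :
    √(∑ i, (f i + g i) ^ 2) ≤ √(∑ i, f i ^ 2) + √(∑ i, g i ^ 2) := by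
  simpa [EuclideanSpace.norm_eq, sq_abs] using norm_add_le (WithLp.toLp 2 f) (WithLp.toLp 2 g)

lemma sqrt_mul_sum_sq_add_le {ι : Type*} [Fintype ι] {c : ℝ} (hc : 0 ≤ c) (f g : ι → ℝ) :
    √(c * ∑ i, (f i + g i) ^ 2) ≤ √(c * ∑ i, f i ^ 2) + √(c * ∑ i, g i ^ 2) := by
  simp only [Real.sqrt_mul hc, ← mul_add]
  exact mul_le_mul_of_nonneg_left (sqrt_sum_sq_add_le f g) (Real.sqrt_nonneg c)

lemma sum_sq_le_sum_sq_mul_sq {ι : Type*} [Fintype ι] {r c : ι → ℝ} {t : ℝ}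
    (h : ∀ i, |r i| ≤ c i * t) : ∑ i, r i ^ 2 ≤ (∑ i, c i ^ 2) * t ^ 2 := by
  rw [Finset.sum_mul]
  refine Finset.sum_le_sum fun i _ => ?_
  rw [← mul_pow, sq_le_sq]
  exact (h i).trans (le_abs_self _)

lemma dotProduct_mulVec_smul_transpose_mul_self {ι m R : Type*} [Fintype ι] [Fintype m]
    [CommSemiring R] (c : R) (D : Matrix ι m R) (x : m → R) :
    x ⬝ᵥ (c • (Dᵀ * D)) *ᵥ x = c * (D *ᵥ x ⬝ᵥ D *ᵥ x) := by
  rw [smul_mulVec, dotProduct_smul, ← mulVec_mulVec, dotProduct_mulVec, vecMul_transpose,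
    smul_eq_mul]

lemma dotProduct_eq_subtype_of_support_subset {ι R : Type*} [Fintype ι]
    [NonUnitalNonAssocSemiring R] {s : Finset ι} {x : ι → R} (hx : ∀ i ∉ s, x i = 0)
    (y : ι → R) : x ⬝ᵥ y = (fun i : s => x i) ⬝ᵥ (fun i : s => y i) := by
  simp only [dotProduct]
  rw [Finset.sum_coe_sort s (fun i => x i * y i)]
  exact (Finset.sum_subset s.subset_univ fun i _ hi => by rw [hx i hi, zero_mul]).symm

lemma dotProduct_mulVec_eq_submatrix_of_support_subset {ι R : Type*} [Fintype ι]
    [CommSemiring R] {s : Finset ι} {x : ι → R} (hx : ∀ i ∉ s, x i = 0) (A : Matrix ι ι R) :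
    x ⬝ᵥ A *ᵥ x = (fun i : s => x i) ⬝ᵥ A.submatrix (↑) (↑) *ᵥ (fun i : s => x i) := by
  rw [dotProduct_eq_subtype_of_support_subset hx]
  congr 1
  funext i
  simp only [mulVec, submatrix_apply]
  rw [dotProduct_comm, dotProduct_eq_subtype_of_support_subset hx, dotProduct_comm]

theorem Matrix.IsHermitian.dotProduct_mulVec_le_iSup_eigenvalues_mul {m : Type*} [Fintype m]
    [DecidableEq m] {B : Matrix m m ℝ} (hB : B.IsHermitian) (x : m → ℝ) :
    x ⬝ᵥ B *ᵥ x ≤ (⨆ i, hB.eigenvalues i) * (x ⬝ᵥ x) := by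
  set U : Matrix m m ℝ := (hB.eigenvectorUnitary : Matrix m m ℝ) with hU
  have hstar : star U = Uᵀ := by simp [star_eq_conjTranspose]
  have hUU : U * Uᵀ = 1 := hstar ▸ Unitary.mul_star_self_of_mem hB.eigenvectorUnitary.2
  set w := Uᵀ *ᵥ x
  have hquad : x ⬝ᵥ B *ᵥ x = w ⬝ᵥ diagonal hB.eigenvalues *ᵥ w := by
    conv_lhs => rw [hB.spectral_theorem, Unitary.conjStarAlgAut_apply, ← hU, hstar]
    rw [← mulVec_mulVec, ← mulVec_mulVec, dotProduct_mulVec, ← mulVec_transpose]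
    rfl
  have hnorm : x ⬝ᵥ x = w ⬝ᵥ w := by
    rw [dotProduct_mulVec, vecMul_transpose, mulVec_mulVec, hUU, one_mulVec]
  rw [hquad, hnorm]
  simp only [dotProduct, mulVec_diagonal, Finset.mul_sum]
  refine Finset.sum_le_sum fun i _ => ?_
  have hle : hB.eigenvalues i ≤ ⨆ i, hB.eigenvalues i :=
    le_ciSup (Set.finite_range _).bddAbove i
  nlinarith [mul_self_nonneg (w i)]

theorem targeted_undersmoothing_stmt0_general
    (n p : ℕ)
    (a : Fin n → (Fin p → ℝ) → ℝ) (da : Fin n → Fin p → ℝ) (ca : Fin n → ℝ)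
    (betaHat β₀ : Fin p → ℝ)
    (hlin : ∀ i, ∀ β : Fin p → ℝ,
      |a i β - a i β₀ - ∑ j, da i j * (β j - β₀ j)|
        ≤ ca i * Real.sqrt (∑ j, (β j - β₀ j) ^ 2))
    (A : Matrix (Fin p) (Fin p) ℝ)
    (hA : A = Matrix.of fun j k => (1 / (n : ℝ)) * ∑ i, da i j * da i k)
    (K : Finset (Fin p))
    (hK : K = Finset.univ.filter (fun j => betaHat j ≠ 0 ∨ β₀ j ≠ 0))
    (hAh : (A.submatrix (Subtype.val : {j // j ∈ K} → Fin p)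
              (Subtype.val : {j // j ∈ K} → Fin p)).IsHermitian)
    (φmax : ℝ)
    (hφ : φmax = ⨆ i : {j // j ∈ K}, hAh.eigenvalues i) :
    Real.sqrt ((1 / (n : ℝ)) * ∑ i, (a i betaHat - a i β₀) ^ 2)
      ≤ Real.sqrt (∑ j, (betaHat j - β₀ j) ^ 2) *
          (Real.sqrt φmax + Real.sqrt ((1 / (n : ℝ)) * ∑ i, (ca i) ^ 2)) := by
  set Δ : Fin p → ℝ := fun j => betaHat j - β₀ j
  set S := √(∑ j, Δ j ^ 2)
  set D : Matrix (Fin n) (Fin p) ℝ := Matrix.of da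
  set r : Fin n → ℝ := fun i => a i betaHat - a i β₀ - (D *ᵥ Δ) i
  have hΔK : ∀ j ∉ K, Δ j = 0 := by
    intro j hj
    simp_all [Δ]
  have hS : S ^ 2 = Δ ⬝ᵥ Δ := by
    rw [Real.sq_sqrt (by positivity)]
    simp [dotProduct, sq]
  have hlinear : 1 / (n : ℝ) * ∑ i, (D *ᵥ Δ) i ^ 2 ≤ φmax * S ^ 2 := by
    have hAD : A = (1 / (n : ℝ)) • (Dᵀ * D) := by
      subst hA
      ext j k
      simp [D, mul_apply]
    calc 1 / (n : ℝ) * ∑ i, (D *ᵥ Δ) i ^ 2 = Δ ⬝ᵥ A *ᵥ Δ := by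
          rw [hAD, dotProduct_mulVec_smul_transpose_mul_self]
          simp [dotProduct, sq]
      _ = _ := dotProduct_mulVec_eq_submatrix_of_support_subset hΔK A
      _ ≤ φmax * _ := hφ ▸ hAh.dotProduct_mulVec_le_iSup_eigenvalues_mul _
      _ = φmax * S ^ 2 := by rw [hS, dotProduct_eq_subtype_of_support_subset hΔK]
  have hremainder : 1 / (n : ℝ) * ∑ i, r i ^ 2 ≤ (1 / (n : ℝ) * ∑ i, ca i ^ 2) * S ^ 2 := by
    rw [mul_assoc]
    gcongr
    exact sum_sq_le_sum_sq_mul_sq fun i => hlin i betaHat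
  calc √(1 / (n : ℝ) * ∑ i, (a i betaHat - a i β₀) ^ 2)
        = √(1 / (n : ℝ) * ∑ i, ((D *ᵥ Δ) i + r i) ^ 2) := by simp [r]
    _ ≤ √(1 / (n : ℝ) * ∑ i, (D *ᵥ Δ) i ^ 2) + √(1 / (n : ℝ) * ∑ i, r i ^ 2) :=
        sqrt_mul_sum_sq_add_le (by positivity) _ _
    _ ≤ √(φmax * S ^ 2) + √((1 / (n : ℝ) * ∑ i, ca i ^ 2) * S ^ 2) := by gcongr
    _ = S * (√φmax + √(1 / (n : ℝ) * ∑ i, ca i ^ 2)) := by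
        rw [Real.sqrt_mul' _ (sq_nonneg S), Real.sqrt_mul' _ (sq_nonneg S),
          Real.sqrt_sq (Real.sqrt_nonneg _)]
        ring

/-- rate bound for linearizable functionals of a post-model-selection
estimator.  `φmax` is the largest eigenvalue of the principal submatrix of
`A = (1/n) ∑ᵢ da(zᵢ) da(zᵢ)'` indexed by `K = support betaHat ∪ support β₀`. -/
theorem targeted_undersmoothing_stmt0
    (n p : ℕ) (hn : 0 < n)
    (a : Fin n → (Fin p → ℝ) → ℝ) (da : Fin n → Fin p → ℝ) (ca : Fin n → ℝ)
    (betaHat β₀ : Fin p → ℝ)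
    (hca : ∀ i, 0 ≤ ca i)
    (hlin : ∀ i, ∀ β : Fin p → ℝ,
      |a i β - a i β₀ - ∑ j, da i j * (β j - β₀ j)|
        ≤ ca i * Real.sqrt (∑ j, (β j - β₀ j) ^ 2))
    (A : Matrix (Fin p) (Fin p) ℝ)
    (hA : A = Matrix.of fun j k => (1 / (n : ℝ)) * ∑ i, da i j * da i k)
    (K : Finset (Fin p))
    (hK : K = Finset.univ.filter (fun j => betaHat j ≠ 0 ∨ β₀ j ≠ 0))
    (hAh : (A.submatrix (Subtype.val : {j // j ∈ K} → Fin p)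
              (Subtype.val : {j // j ∈ K} → Fin p)).IsHermitian)
    (φmax : ℝ)
    (hφ : φmax = ⨆ i : {j // j ∈ K}, hAh.eigenvalues i) :
    Real.sqrt ((1 / (n : ℝ)) * ∑ i, (a i betaHat - a i β₀) ^ 2)
      ≤ Real.sqrt (∑ j, (betaHat j - β₀ j) ^ 2) *
          (Real.sqrt φmax + Real.sqrt ((1 / (n : ℝ)) * ∑ i, (ca i) ^ 2)) :=
  targeted_undersmoothing_stmt0_general n p a da ca betaHat β₀ hlin A hA K hK hAh φmax hφ
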